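/- Let g be a finite-dimensional complex reductive Lie algebra, k a symmetric subalgebra with rank k = rank g, and suppose k is not maximal among proper subalgebras containing it, with triangular decomposition g = r ⊕ k ⊕ r̄ where r, r̄ are abelian k-stable subalgebras such that k ⋉ r and k ⋉ r̄ are subalgebras of g. Then there are exactly four Lie subalgebras of g containing k: namely k, k ⋉ r, k ⋉ r̄, and g. -/

import Mathlib

/-!
A subalgebra `q ⊇ k` is a `k`-submodule of `g`, so by the modular law
`q = k ⊕ (q ∩ (r ⊕ r̄))`. The `k`-submodules `N` of `r ⊕ r̄` are classified as in Goursat's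
lemma: `N ∩ r` and `N ∩ r̄` are `0` or everything by simplicity, and if both vanish while
`N ≠ 0`, the equivariant projections along `k`-stable complements identify `N` with `r` and
with `r̄`, contradicting that these are non-isomorphic.
-/

theorem disjoint_of_le_sup_of_le {α : Type*} [Lattice α] [OrderBot α] [IsModularLattice α]
    {a b c n : α} (hn : n ≤ a ⊔ b) (hbc : b ≤ c) (hac : Disjoint a c) (hnb : Disjoint n b) :
    Disjoint n c := by
  have hinf : n ⊓ c ≤ b :=
    calc n ⊓ c ≤ (b ⊔ a) ⊓ c := inf_le_inf_right c (sup_comm a b ▸ hn)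
      _ = b ⊔ a ⊓ c := sup_inf_assoc_of_le a hbc
      _ = b := by rw [hac.eq_bot, sup_bot_eq]
  rw [disjoint_iff_inf_le]
  exact (le_inf inf_le_left hinf).trans hnb.le_bot

namespace LieSubalgebra

variable {R L : Type*} [CommRing R] [LieRing L] [LieAlgebra R L] (k : LieSubalgebra R L)

def AdInvariant (U : Submodule R L) : Prop :=
  ∀ x ∈ k, ∀ y ∈ U, ⁅x, y⁆ ∈ U

def IsAdEquivariant {U V : Submodule R L} (f : U →ₗ[R] V) : Prop :=
  ∀ x ∈ k, ∀ u : U, ∀ h : ⁅x, (u : L)⁆ ∈ U, (f ⟨⁅x, (u : L)⁆, h⟩ : L) = ⁅x, (f u : L)⁆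

variable {k}

theorem adInvariant_toSubmodule_of_le {q : LieSubalgebra R L} (h : k ≤ q) :
    k.AdInvariant q.toSubmodule :=
  fun _ hx _ hy => q.lie_mem (h hx) hy

namespace AdInvariant

variable {U V : Submodule R L}

theorem inf (hU : k.AdInvariant U) (hV : k.AdInvariant V) : k.AdInvariant (U ⊓ V) :=
  fun x hx _ hy => ⟨hU x hx _ hy.1, hV x hx _ hy.2⟩

theorem sup (hU : k.AdInvariant U) (hV : k.AdInvariant V) : k.AdInvariant (U ⊔ V) := by
  intro x hx y hy
  obtain ⟨u, hu, v, hv, rfl⟩ := Submodule.mem_sup.mp hy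
  rw [lie_add]
  exact Submodule.add_mem_sup (hU x hx u hu) (hV x hx v hv)

theorem mem_invtSubmodule (hU : k.AdInvariant U) {x : L} (hx : x ∈ k) :
    U ∈ Module.End.invtSubmodule (LieAlgebra.ad R L x) :=
  hU x hx

theorem projection_lie (hU : k.AdInvariant U) (hV : k.AdInvariant V) (hUV : IsCompl U V)
    {x : L} (hx : x ∈ k) (y : L) :
    U.projection V hUV ⁅x, y⁆ = ⁅x, U.projection V hUV y⁆ := by
  have hcomm : Commute (U.projection V hUV) (LieAlgebra.ad R L x) :=
    (LinearMap.IsIdempotentElem.commute_iff (Submodule.isIdempotentElem_projection hUV)).mpr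
      ⟨by rw [Submodule.range_projection]; exact hU.mem_invtSubmodule hx,
        by rw [Submodule.ker_projection]; exact hV.mem_invtSubmodule hx⟩
  exact LinearMap.congr_fun hcomm.eq y

theorem map_projection (hU : k.AdInvariant U) (hV : k.AdInvariant V) (hUV : IsCompl U V)
    {N : Submodule R L} (hN : k.AdInvariant N) : k.AdInvariant (N.map (U.projection V hUV)) := by
  rintro x hx _ ⟨n, hn, rfl⟩
  exact ⟨⁅x, n⁆, hN x hx n hn, hU.projection_lie hV hUV hx n⟩

theorem eq_bot_or_exists_equiv {C N : Submodule R L} (hU : k.AdInvariant U)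
    (hC : k.AdInvariant C) (hN : k.AdInvariant N) (hUC : IsCompl U C)
    (hUsimple : ∀ W ≤ U, k.AdInvariant W → W = ⊥ ∨ W = U) (hNC : Disjoint N C) :
    N = ⊥ ∨ ∃ f : N ≃ₗ[R] U, k.IsAdEquivariant (f : N →ₗ[R] U) := by
  set π : N →ₗ[R] U := U.projectionOnto C hUC ∘ₗ N.subtype
  have hπ : k.IsAdEquivariant π := fun x hx n _ => hU.projection_lie hC hUC hx n
  have hinj : Function.Injective π := by
    refine (injective_iff_map_eq_zero π).mpr fun n hn => Subtype.ext ?_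
    exact Submodule.disjoint_def.mp hNC _ n.2
      ((Submodule.projectionOnto_apply_eq_zero_iff hUC).mp hn)
  have hWU : N.map (U.projection C hUC) ≤ U :=
    LinearMap.map_le_range.trans (Submodule.range_projection hUC).le
  rcases hUsimple _ hWU (hU.map_projection hC hUC hN) with hW | hW
  · left
    rw [← LinearMap.le_ker_iff_map, Submodule.ker_projection] at hW
    exact hNC.eq_bot_of_le hW
  · right
    have hsurj : Function.Surjective π := by
      intro u
      obtain ⟨n, hn, hnu⟩ : (u : L) ∈ N.map (U.projection C hUC) := by
        rw [hW]; exact u.2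
      exact ⟨⟨n, hn⟩, Subtype.ext hnu⟩
    exact ⟨LinearEquiv.ofBijective π ⟨hinj, hsurj⟩, hπ⟩

end AdInvariant

namespace IsAdEquivariant

variable {U V W : Submodule R L}

theorem comp {f : V →ₗ[R] W} {g : U →ₗ[R] V} (hf : k.IsAdEquivariant f)
    (hg : k.IsAdEquivariant g) : k.IsAdEquivariant (f ∘ₗ g) := by
  intro x hx u h
  have hgu : ⁅x, (g u : L)⁆ ∈ V := hg x hx u h ▸ (g _).2
  have hg' : g ⟨⁅x, (u : L)⁆, h⟩ = ⟨⁅x, (g u : L)⁆, hgu⟩ := Subtype.ext (hg x hx u h)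
  simp only [LinearMap.comp_apply, hg']
  exact hf x hx (g u) hgu

theorem symm (hU : k.AdInvariant U) {f : U ≃ₗ[R] V} (hf : k.IsAdEquivariant (f : U →ₗ[R] V)) :
    k.IsAdEquivariant (f.symm : V →ₗ[R] U) := by
  intro x hx v h
  obtain ⟨u, rfl⟩ := f.surjective v
  have hu : ⁅x, (u : L)⁆ ∈ U := hU x hx u u.2
  have hfu : f ⟨⁅x, (u : L)⁆, hu⟩ = ⟨⁅x, (f u : L)⁆, h⟩ := Subtype.ext (hf x hx u hu)
  simp only [LinearEquiv.coe_coe, ← hfu, LinearEquiv.symm_apply_apply]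

end IsAdEquivariant

theorem AdInvariant.eq_bot_or_eq_or_eq_or_eq_sup {N r rbar C D : Submodule R L}
    (hN : k.AdInvariant N) (hr : k.AdInvariant r) (hrbar : k.AdInvariant rbar)
    (hC : k.AdInvariant C) (hD : k.AdInvariant D)
    (hrC : IsCompl r C) (hrbarD : IsCompl rbar D) (hrbarC : rbar ≤ C) (hrD : r ≤ D)
    (hrsimple : ∀ W ≤ r, k.AdInvariant W → W = ⊥ ∨ W = r)
    (hrbarsimple : ∀ W ≤ rbar, k.AdInvariant W → W = ⊥ ∨ W = rbar)
    (hnoniso : ¬ ∃ φ : r ≃ₗ[R] rbar, k.IsAdEquivariant (φ : r →ₗ[R] rbar))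
    (hNle : N ≤ r ⊔ rbar) : N = ⊥ ∨ N = r ∨ N = rbar ∨ N = r ⊔ rbar := by
  have hNle' : N ≤ rbar ⊔ r := sup_comm r rbar ▸ hNle
  rcases hrsimple _ inf_le_right (hN.inf hr) with hNr | hNr <;>
    rcases hrbarsimple _ inf_le_right (hN.inf hrbar) with hNrbar | hNrbar
  · left
    have hNC : Disjoint N C :=
      disjoint_of_le_sup_of_le hNle hrbarC hrC.disjoint (disjoint_iff.mpr hNrbar)
    have hND : Disjoint N D :=
      disjoint_of_le_sup_of_le hNle' hrD hrbarD.disjoint (disjoint_iff.mpr hNr)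
    obtain hN0 | ⟨f, hf⟩ := hr.eq_bot_or_exists_equiv hC hN hrC hrsimple hNC
    · exact hN0
    obtain hN0 | ⟨f', hf'⟩ := hrbar.eq_bot_or_exists_equiv hD hN hrbarD hrbarsimple hND
    · exact hN0
    exact (hnoniso ⟨f.symm.trans f', hf'.comp (hf.symm hN)⟩).elim
  · right; right; left
    refine (eq_of_le_of_inf_le_of_sup_le (inf_eq_right.mp hNrbar) ?_
      (sup_le hNle' le_sup_right)).symm
    rw [hNr]
    exact bot_le
  · right; left
    refine (eq_of_le_of_inf_le_of_sup_le (inf_eq_right.mp hNr) ?_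
      (sup_le hNle le_sup_right)).symm
    rw [hNrbar]
    exact bot_le
  · right; right; right
    exact le_antisymm hNle (sup_le (inf_eq_right.mp hNr) (inf_eq_right.mp hNrbar))

end LieSubalgebra

theorem four_subalgebras_containing_k_general (g : Type*) [LieRing g] [LieAlgebra ℂ g]
    (k : LieSubalgebra ℂ g)
    (r rbar : Submodule ℂ g)
    -- triangular decomposition g = r ⊕ k ⊕ r̄
    (hdecomp : r ⊔ k.toSubmodule ⊔ rbar = ⊤)
    (hind : Disjoint r k.toSubmodule ∧ Disjoint (r ⊔ k.toSubmodule) rbar)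
    -- k-stability
    (hkr : ∀ x ∈ k, ∀ y ∈ r, ⁅x, y⁆ ∈ r)
    (hkrbar : ∀ x ∈ k, ∀ y ∈ rbar, ⁅x, y⁆ ∈ rbar)
    -- r, r̄ are nonzero simple k-modules
    (hrsimple : ∀ U : Submodule ℂ g, U ≤ r → (∀ x ∈ k, ∀ y ∈ U, ⁅x, y⁆ ∈ U) →
      U = ⊥ ∨ U = r)
    (hrbarsimple : ∀ U : Submodule ℂ g, U ≤ rbar → (∀ x ∈ k, ∀ y ∈ U, ⁅x, y⁆ ∈ U) →
      U = ⊥ ∨ U = rbar)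
    -- r and r̄ are non-isomorphic as k-modules
    (hnoniso : ¬ ∃ φ : ↥r ≃ₗ[ℂ] ↥rbar, ∀ x ∈ k, ∀ v : ↥r,
      ∀ h : ⁅x, (v : g)⁆ ∈ r, (φ ⟨⁅x, (v : g)⁆, h⟩ : g) = ⁅x, (φ v : g)⁆) :
    ∀ q : LieSubalgebra ℂ g, k ≤ q →
      q = k ∨ q.toSubmodule = k.toSubmodule ⊔ r ∨
      q.toSubmodule = k.toSubmodule ⊔ rbar ∨ q = ⊤ := by
  intro q hq
  have hkq : k.toSubmodule ≤ q.toSubmodule := (LieSubalgebra.toSubmodule_le_toSubmodule _ _).mpr hq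
  have hr : k.AdInvariant r := hkr
  have hrbar : k.AdInvariant rbar := hkrbar
  have hk : k.AdInvariant k.toSubmodule := LieSubalgebra.adInvariant_toSubmodule_of_le le_rfl
  have hrC : IsCompl r (k.toSubmodule ⊔ rbar) :=
    ⟨hind.1.disjoint_sup_right_of_disjoint_sup_left hind.2,
      codisjoint_iff.mpr (by rw [← sup_assoc, hdecomp])⟩
  have hrbarD : IsCompl rbar (r ⊔ k.toSubmodule) :=
    ⟨hind.2.symm, codisjoint_iff.mpr (by rw [sup_comm, hdecomp])⟩
  have hsup : r ⊔ rbar ⊔ k.toSubmodule = ⊤ := by rw [sup_right_comm, hdecomp]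
  have hq_eq : q.toSubmodule = q.toSubmodule ⊓ (r ⊔ rbar) ⊔ k.toSubmodule := by
    rw [inf_sup_assoc_of_le _ hkq, hsup, inf_top_eq]
  obtain hN | hN | hN | hN := ((LieSubalgebra.adInvariant_toSubmodule_of_le hq).inf (hr.sup hrbar))
    |>.eq_bot_or_eq_or_eq_or_eq_sup hr hrbar (hk.sup hrbar) (hr.sup hk) hrC hrbarD
      le_sup_right le_sup_left hrsimple hrbarsimple hnoniso inf_le_right
  · left
    rw [← LieSubalgebra.toSubmodule_inj, hq_eq, hN, bot_sup_eq]
  · right; left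
    rw [hq_eq, hN, sup_comm]
  · right; right; left
    rw [hq_eq, hN, sup_comm]
  · right; right; right
    rw [← LieSubalgebra.toSubmodule_inj, hq_eq, hN, hsup, LieSubalgebra.top_toSubmodule]

/-- Let `g` be a finite-dimensional complex reductive Lie algebra (radical = centre),
`k` the fixed-point subalgebra of an involution `θ`, containing a Cartan subalgebra of
`g` (so `rank k = rank g`), and suppose `k` is not maximal, with triangular decomposition
`g = r ⊕ k ⊕ r̄` where `r, r̄` are abelian `k`-stable subalgebras (so `k ⋉ r` and
`k ⋉ r̄` are subalgebras), `[r, r̄] ⊆ k`, and `r, r̄` are simple, mutually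
non-isomorphic `k`-modules.  Then there are exactly four Lie subalgebras of `g`
containing `k`: namely `k`, `k ⋉ r`, `k ⋉ r̄` and `g`. -/
theorem four_subalgebras_containing_k (g : Type*) [LieRing g] [LieAlgebra ℂ g]
    [FiniteDimensional ℂ g]
    (hred : LieAlgebra.radical ℂ g = LieAlgebra.center ℂ g)
    (θ : g ≃ₗ⁅ℂ⁆ g) (hθ : ∀ x, θ (θ x) = x)
    (k : LieSubalgebra ℂ g) (hk : (k : Set g) = {x | θ x = x})
    (H : LieSubalgebra ℂ g) (hH : H.IsCartanSubalgebra) (hHk : H ≤ k)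
    (r rbar : Submodule ℂ g)
    -- triangular decomposition g = r ⊕ k ⊕ r̄
    (hdecomp : r ⊔ k.toSubmodule ⊔ rbar = ⊤)
    (hind : Disjoint r k.toSubmodule ∧ Disjoint (r ⊔ k.toSubmodule) rbar)
    -- r and r̄ are abelian subalgebras
    (hrab : ∀ x ∈ r, ∀ y ∈ r, ⁅x, y⁆ = 0)
    (hrbarab : ∀ x ∈ rbar, ∀ y ∈ rbar, ⁅x, y⁆ = 0)
    -- k-stability
    (hkr : ∀ x ∈ k, ∀ y ∈ r, ⁅x, y⁆ ∈ r)
    (hkrbar : ∀ x ∈ k, ∀ y ∈ rbar, ⁅x, y⁆ ∈ rbar)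
    (hrrbar : ∀ x ∈ r, ∀ y ∈ rbar, ⁅x, y⁆ ∈ k)
    -- r, r̄ are nonzero simple k-modules
    (hrne : r ≠ ⊥) (hrbarne : rbar ≠ ⊥)
    (hrsimple : ∀ U : Submodule ℂ g, U ≤ r → (∀ x ∈ k, ∀ y ∈ U, ⁅x, y⁆ ∈ U) →
      U = ⊥ ∨ U = r)
    (hrbarsimple : ∀ U : Submodule ℂ g, U ≤ rbar → (∀ x ∈ k, ∀ y ∈ U, ⁅x, y⁆ ∈ U) →
      U = ⊥ ∨ U = rbar)
    -- r and r̄ are non-isomorphic as k-modules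
    (hnoniso : ¬ ∃ φ : ↥r ≃ₗ[ℂ] ↥rbar, ∀ x ∈ k, ∀ v : ↥r,
      ∀ h : ⁅x, (v : g)⁆ ∈ r, (φ ⟨⁅x, (v : g)⁆, h⟩ : g) = ⁅x, (φ v : g)⁆) :
    ∀ q : LieSubalgebra ℂ g, k ≤ q →
      q = k ∨ q.toSubmodule = k.toSubmodule ⊔ r ∨
      q.toSubmodule = k.toSubmodule ⊔ rbar ∨ q = ⊤ :=
  four_subalgebras_containing_k_general g k r rbar hdecomp hind hkr hkrbar hrsimple hrbarsimple
    hnoniso
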